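/- arXiv:1807.04214 — 2 statements merged into one kernel-verified Lean document; each statement's English description precedes it below -/
import Mathlib

section
/- Let $L \ge 0$, let $P$ be a real $(L+1) \times (L+1)$ matrix indexed by $\{0,\dots,L\}$ with nonnegative entries and lower triangular ($P_{xy} = 0$ for $y > x$), and let $\pi^0_0, \dots, \pi^0_L \ge 0$. Assume that for all $0 \le j < i \le L$ we have $P_{jj} > 0$ and $P_{ii} \neq P_{jj}$. Then for every $\Delta \ge 1$: $\sum_{i=0}^{L} \sum_{j=0}^{i} j \, (P^{\Delta})_{ij} \, \pi^0_i \;\ge\; \sum_{j=0}^{L} j \, \pi^0_j \, P_{jj}^{\Delta} \;+\; \sum_{i=0}^{L} \sum_{j=0}^{i-1} j \, \pi^0_i \, P_{ij} \, P_{jj}^{\Delta - 1} \, \frac{1 - (P_{ii}/P_{jj})^{\Delta}}{1 - P_{ii}/P_{jj}}$. -/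
/-!
Expanding `(P ^ Δ)_{ij}` as a sum over paths of length `Δ` with nonnegative weights, the revenue
is bounded below by the paths that only ever visit `i` and `j`. For the diagonal terms these give
`(P ^ Δ)_{jj} = P_{jj} ^ Δ` exactly, by triangularity. For `j < i` they stay at `i` for `l` steps,
jump to `j`, and stay there, with total weight `P_{ij} ∑_{l < Δ} P_{ii} ^ l P_{jj} ^ (Δ - 1 - l)`,
which is the closed form of the statement once the geometric sum is evaluated.
-/

open Finset

namespace Matrix

variable {n R : Type*} [Fintype n] [DecidableEq n]

theorem IsLowerTriangular.pow_apply_self [LinearOrder n] [Semiring R] {M : Matrix n n R}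
    (hM : M.IsLowerTriangular) (k : ℕ) (i : n) : (M ^ k) i i = M i i ^ k := by
  induction k with
  | zero => simp
  | succ k ih =>
    rw [pow_succ, mul_apply, sum_eq_single i, ih, pow_succ]
    · intro l _ hli
      rcases hli.lt_or_gt with hli | hil
      · rw [hM (OrderDual.toDual_lt_toDual.mpr hli), mul_zero]
      · rw [hM.pow k (OrderDual.toDual_lt_toDual.mpr hil), zero_mul]
    · simp

theorem apply_self_pow_le_pow_apply_self [Semiring R] [PartialOrder R] [IsOrderedRing R]
    {M : Matrix n n R} (hM : ∀ i j, 0 ≤ M i j) (k : ℕ) (i : n) :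
    M i i ^ k ≤ (M ^ k) i i := by
  induction k with
  | zero => simp
  | succ k ih =>
    rw [pow_succ, pow_succ, mul_apply]
    calc M i i ^ k * M i i ≤ (M ^ k) i i * M i i := by gcongr; exact hM i i
      _ ≤ ∑ l, (M ^ k) i l * M l i :=
        single_le_sum (fun l _ => mul_nonneg (pow_apply_nonneg hM k i l) (hM l i)) (mem_univ i)

theorem apply_mul_geom_sum₂_le_pow_apply [CommRing R] [PartialOrder R] [IsOrderedRing R]
    {M : Matrix n n R} (hM : ∀ i j, 0 ≤ M i j) {i j : n} (hij : i ≠ j)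
    (k : ℕ) : M i j * ∑ l ∈ range k, M i i ^ l * M j j ^ (k - 1 - l) ≤ (M ^ k) i j := by
  induction k with
  | zero => simpa using pow_apply_nonneg hM 0 i j
  | succ k ih =>
    calc M i j * ∑ l ∈ range (k + 1), M i i ^ l * M j j ^ (k + 1 - 1 - l)
        = M i i ^ k * M i j + (M i j * ∑ l ∈ range k, M i i ^ l * M j j ^ (k - 1 - l)) * M j j := by
          rw [Nat.add_sub_cancel, geom_sum₂_succ_eq]; ring
      _ ≤ (M ^ k) i i * M i j + (M ^ k) i j * M j j := by
          gcongr
          · exact hM i j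
          · exact apply_self_pow_le_pow_apply_self hM k i
          · exact hM j j
      _ = ∑ l ∈ {i, j}, (M ^ k) i l * M l j := by rw [sum_pair hij]
      _ ≤ (M ^ (k + 1)) i j := by
          rw [pow_succ, mul_apply]
          exact sum_le_sum_of_subset_of_nonneg (subset_univ _)
            fun l _ _ => mul_nonneg (pow_apply_nonneg hM k i l) (hM l j)

end Matrix

theorem pow_pred_mul_div_eq_geom_sum₂ {K : Type*} [Field K] {a b : K} (hb : b ≠ 0) (hab : a ≠ b)
    (n : ℕ) : b ^ (n - 1) * ((1 - (a / b) ^ n) / (1 - a / b)) =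
      ∑ i ∈ range n, a ^ i * b ^ (n - 1 - i) := by
  rw [geom₂_sum hab]
  cases n with
  | zero => simp
  | succ n =>
    have hba : b - a ≠ 0 := sub_ne_zero.mpr hab.symm
    rw [Nat.add_sub_cancel, div_pow]
    field_simp
    ring

theorem stmt_9_general (L : ℕ) (P : Matrix (Fin (L + 1)) (Fin (L + 1)) ℝ)
    (hpos : ∀ x y : Fin (L + 1), 0 ≤ P x y)
    (hlt : ∀ x y : Fin (L + 1), x < y → P x y = 0)
    (π0 : Fin (L + 1) → ℝ) (hπ : ∀ i, 0 ≤ π0 i)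
    (hdiag : ∀ i j : Fin (L + 1), j < i → 0 < P j j ∧ P i i ≠ P j j)
    (Δ : ℕ) :
    ∑ i : Fin (L + 1), ∑ j ∈ Finset.Iic i, ((j : ℕ) : ℝ) * (P ^ Δ) i j * π0 i ≥
      (∑ j : Fin (L + 1), ((j : ℕ) : ℝ) * π0 j * P j j ^ Δ) +
        ∑ i : Fin (L + 1), ∑ j ∈ Finset.Iio i,
          ((j : ℕ) : ℝ) * π0 i * P i j * P j j ^ (Δ - 1) *
            ((1 - (P i i / P j j) ^ Δ) / (1 - P i i / P j j)) := by
  have hP : P.IsLowerTriangular := fun i j hij => hlt i j hij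
  have hoff : ∀ i : Fin (L + 1), ∀ j ∈ Iio i, ((j : ℕ) : ℝ) * π0 i * P i j * P j j ^ (Δ - 1) *
      ((1 - (P i i / P j j) ^ Δ) / (1 - P i i / P j j)) ≤ ((j : ℕ) : ℝ) * (P ^ Δ) i j * π0 i := by
    intro i j hj
    obtain ⟨hjj, hne⟩ := hdiag i j (mem_Iio.mp hj)
    calc ((j : ℕ) : ℝ) * π0 i * P i j * P j j ^ (Δ - 1) *
          ((1 - (P i i / P j j) ^ Δ) / (1 - P i i / P j j))
        = ((j : ℕ) * π0 i) * (P i j * ∑ l ∈ range Δ, P i i ^ l * P j j ^ (Δ - 1 - l)) := by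
          rw [← pow_pred_mul_div_eq_geom_sum₂ hjj.ne' hne]; ring
      _ ≤ ((j : ℕ) * π0 i) * (P ^ Δ) i j :=
          mul_le_mul_of_nonneg_left
            (P.apply_mul_geom_sum₂_le_pow_apply hpos (mem_Iio.mp hj).ne' Δ)
            (mul_nonneg (Nat.cast_nonneg _) (hπ i))
      _ = ((j : ℕ) : ℝ) * (P ^ Δ) i j * π0 i := by ring
  simp_rw [← Iio_insert, sum_insert notMem_Iio_self, sum_add_distrib, hP.pow_apply_self]
  exact add_le_add (sum_congr rfl fun j _ => by ring).le
    (sum_le_sum fun i _ => sum_le_sum (hoff i))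

/-- Lower bound on the cloud manager's expected revenue: for a
nonnegative lower triangular `(L+1) × (L+1)` matrix `P`, nonnegative entering
probabilities `π⁰`, with `P_{jj} > 0` and `P_{ii} ≠ P_{jj}` for all `j < i`, and
every `Δ ≥ 1`:
`∑_i ∑_{j ≤ i} j (P^Δ)_{ij} π⁰_i ≥ ∑_j j π⁰_j P_{jj}^Δ
  + ∑_i ∑_{j < i} j π⁰_i P_{ij} P_{jj}^{Δ-1} (1 - (P_{ii}/P_{jj})^Δ)/(1 - P_{ii}/P_{jj})`. -/
theorem stmt_9 (L : ℕ) (P : Matrix (Fin (L + 1)) (Fin (L + 1)) ℝ)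
    (hpos : ∀ x y : Fin (L + 1), 0 ≤ P x y)
    (hlt : ∀ x y : Fin (L + 1), x < y → P x y = 0)
    (π0 : Fin (L + 1) → ℝ) (hπ : ∀ i, 0 ≤ π0 i)
    (hdiag : ∀ i j : Fin (L + 1), j < i → 0 < P j j ∧ P i i ≠ P j j)
    (Δ : ℕ) (hΔ : 1 ≤ Δ) :
    ∑ i : Fin (L + 1), ∑ j ∈ Finset.Iic i, ((j : ℕ) : ℝ) * (P ^ Δ) i j * π0 i ≥
      (∑ j : Fin (L + 1), ((j : ℕ) : ℝ) * π0 j * P j j ^ Δ) +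
        ∑ i : Fin (L + 1), ∑ j ∈ Finset.Iio i,
          ((j : ℕ) : ℝ) * π0 i * P i j * P j j ^ (Δ - 1) *
            ((1 - (P i i / P j j) ^ Δ) / (1 - P i i / P j j)) :=
  stmt_9_general L P hpos hlt π0 hπ hdiag Δ
end

section
/- Let $u \in \mathbb{R}$, $\gamma, \mu, \lambda_A, \lambda_{CCN}, \lambda_{CP} > 0$, $T > 0$, let $F : \mathbb{R} \to \mathbb{R}$ be differentiable, $G : \mathbb{R} \to \mathbb{R}$ arbitrary, and let $D : \mathbb{R} \to \mathbb{R}$ be differentiable. Define $b(r) = e^{-\gamma r} u - D(r)$. Suppose that for all $r \in [0, T]$, $D$ satisfies the second-price Hamilton–Jacobi–Bellman equation $\gamma D(r) = -D'(r) + \mu \lambda_A \Big( e^{\lambda_{CCN}(F(b(r)) - 1)} (1 - e^{\lambda_{CP}(G(b(r)) - 1)}) (e^{-\gamma r} u - D(r)) - (1 - e^{\lambda_{CP}(G(b(r)) - 1)}) \big[ e^{-\lambda_{CCN}} b(T) + \int_{b(T)}^{b(r)} \lambda_{CCN} \, e^{\lambda_{CCN}(F(s) - 1)} \, s \, F'(s)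 \, ds \big] \Big)$. Then for all $r \in [0, T]$, the bid function $b$ is differentiable and satisfies the integro-differential equation $b(r)\big[ -\gamma - \mu \lambda_A \, e^{\lambda_{CCN}(F(b(r)) - 1)} (1 - e^{\lambda_{CP}(G(b(r)) - 1)}) \big] - b'(r) + \mu \lambda_A \lambda_{CCN} (1 - e^{\lambda_{CP}(G(b(r)) - 1)}) \int_{b(T)}^{b(r)} e^{\lambda_{CCN}(F(s) - 1)} \, s \, F'(s) \, ds + \mu \lambda_A (1 - e^{\lambda_{CP}(G(b(r)) - 1)}) \, e^{-\lambda_{CCN}} b(T) = 0$. -/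
open Real

/-- The derivative is split off as `γ D + D'`, the quantity the HJB equation prescribes. -/
theorem hasDerivAt_exp_neg_mul_mul_sub {D : ℝ → ℝ} {D' : ℝ} (γ u r : ℝ) (hD : HasDerivAt D D' r) :
    HasDerivAt (fun x => exp (-γ * x) * u - D x)
      (-γ * (exp (-γ * r) * u - D r) - (γ * D r + D')) r := by
  refine ((((hasDerivAt_id r).const_mul (-γ)).exp.mul_const u).sub hD).congr_deriv ?_
  simp only [id]
  ring

theorem stmt_12_general (u : ℝ) (γ μ lamA lamCCN lamCP T : ℝ)
    (F : ℝ → ℝ) (G : ℝ → ℝ)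
    (D : ℝ → ℝ) (hD : Differentiable ℝ D)
    (b : ℝ → ℝ) (hb : ∀ r, b r = Real.exp (-γ * r) * u - D r)
    (hHJB : ∀ r ∈ Set.Icc (0 : ℝ) T,
      γ * D r =
        -(deriv D r) +
          μ * lamA *
            (Real.exp (lamCCN * (F (b r) - 1)) *
                (1 - Real.exp (lamCP * (G (b r) - 1))) *
                (Real.exp (-γ * r) * u - D r) -
              (1 - Real.exp (lamCP * (G (b r) - 1))) *
                (Real.exp (-lamCCN) * b T +
                  ∫ s in (b T)..(b r),
                    lamCCN * Real.exp (lamCCN * (F s - 1)) * s * deriv F s))) :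
    Differentiable ℝ b ∧
    ∀ r ∈ Set.Icc (0 : ℝ) T,
      b r *
          (-γ -
            μ * lamA * Real.exp (lamCCN * (F (b r) - 1)) *
              (1 - Real.exp (lamCP * (G (b r) - 1)))) -
        deriv b r +
        μ * lamA * lamCCN * (1 - Real.exp (lamCP * (G (b r) - 1))) *
          (∫ s in (b T)..(b r), Real.exp (lamCCN * (F s - 1)) * s * deriv F s) +
        μ * lamA * (1 - Real.exp (lamCP * (G (b r) - 1))) * Real.exp (-lamCCN) * b T =
      0 := by
  have hb_eq : b = fun x => exp (-γ * x) * u - D x := funext hb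
  have hb_deriv (r : ℝ) : HasDerivAt b (-γ * b r - (γ * D r + deriv D r)) r := by
    rw [hb_eq]
    exact hasDerivAt_exp_neg_mul_mul_sub γ u r (hD r).hasDerivAt
  refine ⟨fun r => (hb_deriv r).differentiableAt, fun r hr => ?_⟩
  have hHJB_r := hHJB r hr
  rw [← hb r] at hHJB_r
  have h_integral :
      (∫ s in (b T)..(b r), lamCCN * exp (lamCCN * (F s - 1)) * s * deriv F s) =
        lamCCN * ∫ s in (b T)..(b r), exp (lamCCN * (F s - 1)) * s * deriv F s := by
    simp only [mul_assoc, intervalIntegral.integral_const_mul]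
  rw [h_integral] at hHJB_r
  rw [(hb_deriv r).deriv]
  linear_combination hHJB_r

/-- In the second-price auction-based market, if the discounted
expected utility `D` satisfies the second-price HJB equation on `[0, T]`, then the bid
function `b(r) = e^{-γ r} u - D(r)` is differentiable and satisfies on `[0, T]` the
integro-differential equation
`b(r)[-γ - μ λ_A e^{λ_CCN (F(b(r))-1)} (1 - e^{λ_CP (G(b(r))-1)})] - b'(r)
  + μ λ_A λ_CCN (1 - e^{λ_CP (G(b(r))-1)}) ∫_{b(T)}^{b(r)} e^{λ_CCN (F(s)-1)} s F'(s) ds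
  + μ λ_A (1 - e^{λ_CP (G(b(r))-1)}) e^{-λ_CCN} b(T) = 0`. -/
theorem stmt_12 (u : ℝ) (γ μ lamA lamCCN lamCP T : ℝ)
    (hγ : 0 < γ) (hμ : 0 < μ) (hA : 0 < lamA) (hCCN : 0 < lamCCN) (hCP : 0 < lamCP)
    (hT : 0 < T)
    (F : ℝ → ℝ) (hF : Differentiable ℝ F) (G : ℝ → ℝ)
    (D : ℝ → ℝ) (hD : Differentiable ℝ D)
    (b : ℝ → ℝ) (hb : ∀ r, b r = Real.exp (-γ * r) * u - D r)
    (hHJB : ∀ r ∈ Set.Icc (0 : ℝ) T,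
      γ * D r =
        -(deriv D r) +
          μ * lamA *
            (Real.exp (lamCCN * (F (b r) - 1)) *
                (1 - Real.exp (lamCP * (G (b r) - 1))) *
                (Real.exp (-γ * r) * u - D r) -
              (1 - Real.exp (lamCP * (G (b r) - 1))) *
                (Real.exp (-lamCCN) * b T +
                  ∫ s in (b T)..(b r),
                    lamCCN * Real.exp (lamCCN * (F s - 1)) * s * deriv F s))) :
    Differentiable ℝ b ∧
    ∀ r ∈ Set.Icc (0 : ℝ) T,
      b r *
          (-γ -
            μ * lamA * Real.exp (lamCCN * (F (b r) - 1)) *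
              (1 - Real.exp (lamCP * (G (b r) - 1)))) -
        deriv b r +
        μ * lamA * lamCCN * (1 - Real.exp (lamCP * (G (b r) - 1))) *
          (∫ s in (b T)..(b r), Real.exp (lamCCN * (F s - 1)) * s * deriv F s) +
        μ * lamA * (1 - Real.exp (lamCP * (G (b r) - 1))) * Real.exp (-lamCCN) * b T =
      0 :=
  stmt_12_general u γ μ lamA lamCCN lamCP T F G D hD b hb hHJB
end
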